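/- arXiv:1603.04542 — 2 statements merged into one kernel-verified Lean document; each statement's English description precedes it below -/
import Mathlib

section
/- Let θ > 0 and define the process X by X_i := Z_i − e^{−θ i} Z_0 for i ∈ ℕ. Then for every real p ≥ 1 there exists a constant C = C(p, θ, f_q) such that for all n ≥ 1: ‖ Q_{f_q,n}(X) − Q_{f_q,n}(Z) ‖_{L^p(Ω)} ≤ C/n. -/
open MeasureTheory ProbabilityTheory Filter
open scoped NNReal ENNReal

noncomputable section

variable {Ω : Type*} [MeasureSpace Ω]

/-- `Z` is a centered stationary Gaussian sequence with covariance `r`. -/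
def IsCSG (Z : ℤ → Ω → ℝ) (r : ℤ → ℝ) : Prop :=
  (∀ k, Measurable (Z k)) ∧
  (∀ (s : Finset ℤ) (a : ℤ → ℝ), ∃ v : ℝ≥0,
    Measure.map (fun ω => ∑ k ∈ s, a k * Z k ω) (ℙ : Measure Ω) = gaussianReal 0 v) ∧
  (∀ j k : ℤ, ∫ ω, Z j ω * Z k ω = r (k - j)) ∧
  0 < r 0

/-- `m`-th probabilists' Hermite polynomial, as a function on `ℝ`. -/
def hermiteFun (m : ℕ) (x : ℝ) : ℝ := Polynomial.aeval x (Polynomial.hermite m)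

/-- The polynomial `f_q(x) = ∑_{k=0}^{q/2} d_{2k} He_{2k}(x/√r0)`. -/
def fpoly (r0 : ℝ) (d : ℕ → ℝ) (q : ℕ) (x : ℝ) : ℝ :=
  ∑ k ∈ Finset.range (q / 2 + 1), d (2 * k) * hermiteFun (2 * k) (x / Real.sqrt r0)

/-- Polynomial variation `Q_{f,n}(X)`. -/
def Qvar (f : ℝ → ℝ) (X : ℤ → Ω → ℝ) (n : ℕ) (ω : Ω) : ℝ :=
  (1 / (n : ℝ)) * ∑ i ∈ Finset.range n, f (X (i : ℤ) ω)

/-- `λ_f(X) = E[f(X_0)]`. -/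
def lamE (f : ℝ → ℝ) (X : ℤ → Ω → ℝ) : ℝ := ∫ ω, f (X 0 ω)

/-- `U_{f,n}(X) = √n (Q_{f,n}(X) − λ_f(X))`. -/
def Ustat (f : ℝ → ℝ) (X : ℤ → Ω → ℝ) (n : ℕ) (ω : Ω) : ℝ :=
  Real.sqrt n * (Qvar f X n ω - lamE f X)

/-- Variance of `U_{f,n}(X)`. -/
def varU (f : ℝ → ℝ) (X : ℤ → Ω → ℝ) (n : ℕ) : ℝ := ∫ ω, (Ustat f X n ω) ^ 2

/-- Standardized statistic `F_{f,n}(X)`. -/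
def Fstat (f : ℝ → ℝ) (X : ℤ → Ω → ℝ) (n : ℕ) (ω : Ω) : ℝ :=
  Ustat f X n ω / Real.sqrt (varU f X n)

/-- fourth cumulant `κ₄(X) = E[X⁴] − 3 (E[X²])²` of a centered random variable. -/
def kappa4 (X : Ω → ℝ) : ℝ := (∫ ω, X ω ^ 4) - 3 * (∫ ω, X ω ^ 2) ^ 2

/-- third cumulant `κ₃(X) = E[X³]`. -/
def kappa3 (X : Ω → ℝ) : ℝ := ∫ ω, X ω ^ 3

/-- `u_{f_q}(Z) = ∑_{k=1}^{q/2} d_{2k}² (2k)! ∑_{j∈ℤ} (r(j)/r(0))^{2k}`. -/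
def ufq (r : ℤ → ℝ) (d : ℕ → ℝ) (q : ℕ) : ℝ :=
  ∑ k ∈ Finset.Icc 1 (q / 2),
    (d (2 * k)) ^ 2 * (Nat.factorial (2 * k)) * ∑' j : ℤ, (r j / r 0) ^ (2 * k)

/-- Total variation distance between two laws on `ℝ`. -/
def dTV (μ ν : Measure ℝ) : ℝ :=
  ⨆ A : {A : Set ℝ // MeasurableSet A}, |(μ A.1).toReal - (ν A.1).toReal|

/-- Wasserstein distance between two laws on `ℝ`. -/
def dW (μ ν : Measure ℝ) : ℝ :=
  ⨆ f : {f : ℝ → ℝ // LipschitzWith 1 f}, |(∫ x, f.1 x ∂μ) - ∫ x, f.1 x ∂ν|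

/-- The quadratic function `f₂(x) = x²`. -/
def f2 : ℝ → ℝ := fun x => x ^ 2

/-- `U_{f₂,n}(X) = √n (Q_{f₂,n}(X) − r(0))`, quadratic case. -/
def U2 (X : ℤ → Ω → ℝ) (r0 : ℝ) (n : ℕ) (ω : Ω) : ℝ :=
  Real.sqrt n * (Qvar f2 X n ω - r0)

/-- Variance of `U_{f₂,n}`. -/
def varU2 (X : ℤ → Ω → ℝ) (r0 : ℝ) (n : ℕ) : ℝ := ∫ ω, (U2 X r0 n ω) ^ 2

/-- Standardized quadratic statistic `F_{f₂,n}`. -/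
def F2stat (X : ℤ → Ω → ℝ) (r0 : ℝ) (n : ℕ) (ω : Ω) : ℝ :=
  U2 X r0 n ω / Real.sqrt (varU2 X r0 n)

/-- `p`-th order finite difference of a sequence of processes. -/
def fdiff : ℕ → (ℤ → Ω → ℝ) → (ℤ → Ω → ℝ)
  | 0, Z => Z
  | (p + 1), Z => fun k ω => fdiff p Z (k + 1) ω - fdiff p Z k ω

/-! Since `f_q` is a polynomial, `|f(x) - f(y)| ≤ A |x - y| (1 + |x| + |y|)^D`. As
`X_i - Z_i = -e^{-θ i} Z_0`, the `i`-th summand of `n (Q_n(X) - Q_n(Z))` therefore has `L^p` norm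
at most `e^{-θ i}` times a constant that depends only on the moments of the common law
`N(0, r(0))` of the `Z_k`. Minkowski's inequality and the geometric series then bound the
`L^p` norm of the whole sum uniformly in `n`. -/

theorem Polynomial.exists_abs_eval_sub_eval_le (P : Polynomial ℝ) :
    ∃ A, 0 ≤ A ∧ ∀ x y : ℝ,
      |P.eval x - P.eval y| ≤ A * |x - y| * (1 + |x| + |y|) ^ P.natDegree := by
  refine ⟨∑ j ∈ Finset.range (P.natDegree + 1), |P.coeff j| * j,
    Finset.sum_nonneg fun j _ => by positivity, fun x y => ?_⟩
  have hS : max |x| |y| ≤ 1 + |x| + |y| := by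
    rcases le_total |x| |y| with h | h <;> simp [h] <;> linarith [abs_nonneg x, abs_nonneg y]
  have hS1 : 1 ≤ 1 + |x| + |y| := by linarith [abs_nonneg x, abs_nonneg y]
  rw [P.eval_eq_sum_range x, P.eval_eq_sum_range y, ← Finset.sum_sub_distrib, Finset.sum_mul,
    Finset.sum_mul]
  refine (Finset.abs_sum_le_sum_abs _ _).trans (Finset.sum_le_sum fun j hj => ?_)
  have hj : j - 1 ≤ P.natDegree := by have := Finset.mem_range.mp hj; omega
  calc |P.coeff j * x ^ j - P.coeff j * y ^ j|
      = |P.coeff j| * |x ^ j - y ^ j| := by rw [← mul_sub, abs_mul]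
    _ ≤ |P.coeff j| * (|x - y| * j * max |x| |y| ^ (j - 1)) := by
      gcongr; exact abs_pow_sub_pow_le x y j
    _ ≤ |P.coeff j| * (|x - y| * j * (1 + |x| + |y|) ^ P.natDegree) := by
      gcongr
      exact (pow_le_pow_left₀ (by positivity) hS _).trans (pow_le_pow_right₀ hS1 hj)
    _ = |P.coeff j| * j * |x - y| * (1 + |x| + |y|) ^ P.natDegree := by ring

theorem abs_comp_sub_mul_sub_comp_le {f : ℝ → ℝ} {A : ℝ} {D : ℕ} (hA : 0 ≤ A)
    (hf : ∀ x y, |f x - f y| ≤ A * |x - y| * (1 + |x| + |y|) ^ D) {e : ℝ} (he0 : 0 ≤ e)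
    (he1 : e ≤ 1) (y w : ℝ) :
    |f (y - e * w) - f y| ≤ A * 2 ^ D * e * (1 + |w| + |y|) ^ (D + 1) := by
  have hew : |e * w| ≤ |w| := by
    rw [abs_mul, abs_of_nonneg he0]; exact mul_le_of_le_one_left (abs_nonneg w) he1
  have hsum : 1 + |y - e * w| + |y| ≤ 2 * (1 + |w| + |y|) := by
    linarith [abs_sub y (e * w), abs_nonneg y, abs_nonneg w]
  calc |f (y - e * w) - f y|
      ≤ A * |y - e * w - y| * (1 + |y - e * w| + |y|) ^ D := hf _ _
    _ ≤ A * (e * (1 + |w| + |y|)) * (2 * (1 + |w| + |y|)) ^ D := by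
      have : |y - e * w - y| ≤ e * (1 + |w| + |y|) := by
        rw [show y - e * w - y = -(e * w) by ring, abs_neg, abs_mul, abs_of_nonneg he0]
        gcongr; linarith [abs_nonneg y]
      gcongr
    _ = A * 2 ^ D * e * (1 + |w| + |y|) ^ (D + 1) := by rw [mul_pow]; ring

theorem exists_polynomial_fpoly_eq_eval (r0 : ℝ) (d : ℕ → ℝ) (q : ℕ) :
    ∃ P : Polynomial ℝ, fpoly r0 d q = fun x => P.eval x := by
  refine ⟨∑ k ∈ Finset.range (q / 2 + 1), Polynomial.C (d (2 * k)) *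
    ((Polynomial.hermite (2 * k)).map (Int.castRingHom ℝ)).comp
      (Polynomial.C (Real.sqrt r0)⁻¹ * Polynomial.X), ?_⟩
  funext x
  simp [fpoly, hermiteFun, Polynomial.eval_finsetSum, Polynomial.aeval_def, Polynomial.eval_map,
    div_eq_inv_mul]

theorem integral_sq_gaussianReal_zero (v : ℝ≥0) : ∫ x, x ^ 2 ∂gaussianReal 0 v = v := by
  have h := variance_eq_integral (X := id) (μ := gaussianReal 0 v) aemeasurable_id
  simpa [variance_id_gaussianReal, integral_id_gaussianReal] using h.symm

namespace IsCSG

variable {Z : ℤ → Ω → ℝ} {r : ℤ → ℝ}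

theorem measurable (hZ : IsCSG Z r) (k : ℤ) : Measurable (Z k) := hZ.1 k

theorem map_eq_gaussianReal (hZ : IsCSG Z r) (k : ℤ) :
    (ℙ : Measure Ω).map (Z k) = gaussianReal 0 (r 0).toNNReal := by
  obtain ⟨hmeas, hgauss, hcov, -⟩ := hZ
  obtain ⟨v, hv⟩ := hgauss {k} (fun _ => 1)
  simp only [Finset.sum_singleton, one_mul] at hv
  have hvar : (v : ℝ) = r 0 := by
    rw [← integral_sq_gaussianReal_zero, ← hv, integral_map (hmeas k).aemeasurable (by fun_prop),
      ← sub_self k, ← hcov k k]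
    simp only [sq]
  rw [hv, ← hvar, Real.toNNReal_coe]

theorem eLpNorm_eq_eLpNorm_gaussianReal (hZ : IsCSG Z r) (k : ℤ) (p : ℝ≥0∞) :
    eLpNorm (Z k) p ℙ = eLpNorm id p (gaussianReal 0 (r 0).toNNReal) := by
  rw [← hZ.map_eq_gaussianReal k, eLpNorm_map_measure aestronglyMeasurable_id (hZ.measurable k).aemeasurable]
  rfl

end IsCSG

section LpBounds

variable {α : Type*} {m : MeasurableSpace α} {μ : Measure α} {p : ℝ≥0∞}

theorem eLpNorm_one_add_abs_add_abs_le [IsProbabilityMeasure μ] {U V : α → ℝ}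
    (hU : AEStronglyMeasurable U μ) (hV : AEStronglyMeasurable V μ) (hp : 1 ≤ p) :
    eLpNorm (fun x => 1 + |U x| + |V x|) p μ ≤ 1 + eLpNorm U p μ + eLpNorm V p μ := by
  have hone : eLpNorm (fun _ : α => (1 : ℝ)) p μ = 1 := by
    simp [eLpNorm_const _ (zero_lt_one.trans_le hp).ne' (IsProbabilityMeasure.ne_zero μ)]
  calc eLpNorm (fun x => 1 + |U x| + |V x|) p μ
      ≤ eLpNorm (fun x => 1 + |U x|) p μ + eLpNorm (fun x => |V x|) p μ :=
        eLpNorm_add_le (aestronglyMeasurable_const.add hU.norm) hV.norm hp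
    _ ≤ eLpNorm (fun _ : α => (1 : ℝ)) p μ + eLpNorm (fun x => |U x|) p μ
          + eLpNorm (fun x => |V x|) p μ := by
        gcongr; exact eLpNorm_add_le aestronglyMeasurable_const hU.norm hp
    _ = 1 + eLpNorm U p μ + eLpNorm V p μ := by
        simp only [hone, ← Real.norm_eq_abs, eLpNorm_norm]

theorem eLpNorm_pow_of_nonneg {g : α → ℝ} (hg : ∀ x, 0 ≤ g x) {k : ℕ} (hk : k ≠ 0) :
    eLpNorm (fun x => g x ^ k) p μ = eLpNorm g (p * k) μ ^ k := by
  have h := eLpNorm_norm_rpow g (p := p) (μ := μ) (q := k) (by positivity)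
  simp only [Real.norm_eq_abs, abs_of_nonneg (hg _), Real.rpow_natCast, ENNReal.ofReal_natCast,
    ENNReal.rpow_natCast] at h
  exact h

theorem eLpNorm_sum_le_of_le_geometric {t : ℕ → α → ℝ} (ht : ∀ i, AEStronglyMeasurable (t i) μ)
    (hp : 1 ≤ p) {c ρ : ℝ} (hc : 0 ≤ c) (hρ0 : 0 ≤ ρ) (hρ1 : ρ < 1) {M : ℝ≥0∞}
    (hle : ∀ i, eLpNorm (t i) p μ ≤ ENNReal.ofReal (c * ρ ^ i) * M) (n : ℕ) :
    eLpNorm (∑ i ∈ Finset.range n, t i) p μ ≤ ENNReal.ofReal (c / (1 - ρ)) * M := by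
  have hgeom : ∑ i ∈ Finset.range n, c * ρ ^ i ≤ c / (1 - ρ) := by
    rw [← Finset.mul_sum, div_eq_mul_one_div c]
    gcongr
    have h := geom_sum_Ico_le_of_lt_one (m := 0) (n := n) hρ0 hρ1
    rwa [← Finset.range_eq_Ico, pow_zero] at h
  calc eLpNorm (∑ i ∈ Finset.range n, t i) p μ
      ≤ ∑ i ∈ Finset.range n, eLpNorm (t i) p μ := eLpNorm_sum_le (fun i _ => ht i) hp
    _ ≤ ∑ i ∈ Finset.range n, ENNReal.ofReal (c * ρ ^ i) * M := Finset.sum_le_sum fun i _ => hle i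
    _ ≤ ENNReal.ofReal (c / (1 - ρ)) * M := by
        rw [← Finset.sum_mul, ← ENNReal.ofReal_sum_of_nonneg fun i _ => by positivity]
        gcongr

theorem toReal_eLpNorm_const_mul_le {S : α → ℝ} {M : ℝ≥0∞} (hM : M ≠ ∞)
    (h : eLpNorm S p μ ≤ M) {c : ℝ} (hc : 0 ≤ c) :
    (eLpNorm (fun x => c * S x) p μ).toReal ≤ c * M.toReal := by
  have hsmul : (fun x => c * S x) = c • S := rfl
  rw [hsmul, eLpNorm_const_smul, ← ofReal_norm, Real.norm_eq_abs, abs_of_nonneg hc,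
    ENNReal.toReal_mul, ENNReal.toReal_ofReal hc]
  gcongr

theorem eLpNorm_comp_sub_mul_sub_comp_le [IsProbabilityMeasure μ] {f : ℝ → ℝ} {A : ℝ} {D : ℕ}
    (hA : 0 ≤ A)
    (hf : ∀ x y, |f x - f y| ≤ A * |x - y| * (1 + |x| + |y|) ^ D) {e : ℝ} (he0 : 0 ≤ e)
    (he1 : e ≤ 1) {Y W : α → ℝ} (hY : AEStronglyMeasurable Y μ) (hW : AEStronglyMeasurable W μ)
    (hp : 1 ≤ p) :
    eLpNorm (fun x => f (Y x - e * W x) - f (Y x)) p μ ≤ ENNReal.ofReal (A * 2 ^ D * e) *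
      (1 + eLpNorm W (p * (D + 1 : ℕ)) μ + eLpNorm Y (p * (D + 1 : ℕ)) μ) ^ (D + 1) := by
  set g : α → ℝ := fun x => 1 + |W x| + |Y x|
  have hg : ∀ x, 0 ≤ g x := fun x => by positivity
  have hs : 1 ≤ p * (D + 1 : ℕ) := by
    simpa using mul_le_mul' hp (by exact_mod_cast Nat.succ_pos D : (1 : ℝ≥0∞) ≤ (D + 1 : ℕ))
  calc eLpNorm (fun x => f (Y x - e * W x) - f (Y x)) p μ
      ≤ eLpNorm ((A * 2 ^ D * e) • fun x => g x ^ (D + 1)) p μ := by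
        refine eLpNorm_mono fun x => ?_
        change _ ≤ ‖A * 2 ^ D * e * g x ^ (D + 1)‖
        rw [Real.norm_eq_abs, Real.norm_of_nonneg (by have := hg x; positivity)]
        exact abs_comp_sub_mul_sub_comp_le hA hf he0 he1 (Y x) (W x)
    _ = ENNReal.ofReal (A * 2 ^ D * e) * eLpNorm g (p * (D + 1 : ℕ)) μ ^ (D + 1) := by
        rw [eLpNorm_const_smul, eLpNorm_pow_of_nonneg hg D.succ_ne_zero, ← ofReal_norm,
          Real.norm_eq_abs, abs_of_nonneg (by positivity)]
    _ ≤ _ := by gcongr; exact eLpNorm_one_add_abs_add_abs_le hW hY hs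

end LpBounds

theorem Qvar_sub_Qvar {Ω : Type*} (f : ℝ → ℝ) (X Y : ℤ → Ω → ℝ) (n : ℕ) (ω : Ω) :
    Qvar f X n ω - Qvar f Y n ω =
      1 / n * ∑ i ∈ Finset.range n, (f (X i ω) - f (Y i ω)) := by
  rw [Qvar, Qvar, ← mul_sub, ← Finset.sum_sub_distrib]

theorem statement_17_general
    {Ω : Type*} [MeasureSpace Ω] [IsProbabilityMeasure (ℙ : Measure Ω)]
    (Z : ℤ → Ω → ℝ) (r : ℤ → ℝ) (hZ : IsCSG Z r)
    (q : ℕ)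
    (d : ℕ → ℝ)
    (θ : ℝ) (hθ : 0 < θ)
    (X : ℤ → Ω → ℝ) (hX : ∀ i : ℕ, ∀ ω, X i ω = Z i ω - Real.exp (-θ * i) * Z 0 ω) :
    ∀ p : ℝ, 1 ≤ p → ∃ C > (0 : ℝ), ∀ n : ℕ, 1 ≤ n →
      (eLpNorm
          (fun ω => Qvar (fpoly (r 0) d q) X n ω - Qvar (fpoly (r 0) d q) Z n ω)
          (ENNReal.ofReal p) (ℙ : Measure Ω)).toReal ≤ C / n := by
  intro p hp
  obtain ⟨P, hP⟩ := exists_polynomial_fpoly_eq_eval (r 0) d q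
  obtain ⟨A, hA, hPA⟩ := P.exists_abs_eval_sub_eval_le
  set D := P.natDegree
  set ρ := Real.exp (-θ)
  set K := eLpNorm id (ENNReal.ofReal p * (D + 1 : ℕ)) (gaussianReal 0 (r 0).toNNReal)
  have hK : K ≠ ∞ := (memLp_id_gaussianReal' _ (by finiteness)).eLpNorm_ne_top
  have hp' : 1 ≤ ENNReal.ofReal p := by simpa using ENNReal.ofReal_le_ofReal hp
  set t : ℕ → Ω → ℝ := fun i ω => P.eval (Z i ω - ρ ^ i * Z 0 ω) - P.eval (Z i ω)
  have hterm : ∀ i, eLpNorm (t i) (ENNReal.ofReal p) ℙ ≤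
      ENNReal.ofReal (A * 2 ^ D * ρ ^ i) * (1 + K + K) ^ (D + 1) := fun i => by
    have h := eLpNorm_comp_sub_mul_sub_comp_le (μ := ℙ) hA hPA (e := ρ ^ i) (by positivity)
      (pow_le_one₀ (by positivity) (Real.exp_le_one_iff.2 (by linarith)))
      (hZ.measurable i).aestronglyMeasurable (hZ.measurable 0).aestronglyMeasurable hp'
    rw [hZ.eLpNorm_eq_eLpNorm_gaussianReal, hZ.eLpNorm_eq_eLpNorm_gaussianReal] at h
    exact h
  have hsum := eLpNorm_sum_le_of_le_geometric
    (fun i => by have := hZ.measurable; fun_prop : ∀ i, AEStronglyMeasurable (t i) ℙ) hp' (by positivity)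
    (Real.exp_pos _).le (Real.exp_lt_one_iff.2 (by linarith)) hterm
  set M := ENNReal.ofReal (A * 2 ^ D / (1 - ρ)) * (1 + K + K) ^ (D + 1)
  have hM : M ≠ ∞ := by finiteness
  refine ⟨M.toReal + 1, by positivity, fun n _ => ?_⟩
  have hQ : (fun ω => Qvar (fpoly (r 0) d q) X n ω - Qvar (fpoly (r 0) d q) Z n ω) =
      fun ω => 1 / n * (∑ i ∈ Finset.range n, t i) ω := by
    funext ω
    simp only [Qvar_sub_Qvar, hP, hX, Finset.sum_apply, t, ρ, ← Real.exp_nat_mul, mul_comm (-θ)]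
  rw [hQ]
  calc _ ≤ 1 / n * M.toReal := toReal_eLpNorm_const_mul_le hM (hsum n) (by positivity)
    _ ≤ (M.toReal + 1) / n := by rw [one_div_mul_eq_div]; gcongr; linarith

/-- the non-stationary correction `X_i = Z_i − e^{−θi} Z_0`
perturbs the polynomial variation by `O(1/n)` in every `L^p` norm. -/
theorem statement_17
    {Ω : Type*} [MeasureSpace Ω] [IsProbabilityMeasure (ℙ : Measure Ω)]
    (Z : ℤ → Ω → ℝ) (r : ℤ → ℝ) (hZ : IsCSG Z r)
    (q : ℕ) (hq : 0 < q) (hqe : q % 2 = 0)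
    (d : ℕ → ℝ) (hd : d q = r 0 ^ (q / 2))
    (θ : ℝ) (hθ : 0 < θ)
    (X : ℤ → Ω → ℝ) (hX : ∀ i : ℕ, ∀ ω, X i ω = Z i ω - Real.exp (-θ * i) * Z 0 ω) :
    ∀ p : ℝ, 1 ≤ p → ∃ C > (0 : ℝ), ∀ n : ℕ, 1 ≤ n →
      (eLpNorm
          (fun ω => Qvar (fpoly (r 0) d q) X n ω - Qvar (fpoly (r 0) d q) Z n ω)
          (ENNReal.ofReal p) (ℙ : Measure Ω)).toReal ≤ C / n :=
  statement_17_general Z r hZ q d θ hθ X hX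

end
end

section
/- Let H ∈ (0,1) with H ≠ 1/2 and let m, m' > 0. Then ∫₀^∞ ∫₀^∞ e^{−mu − m'v} ( u^{2H} + v^{2H} − |v − u|^{2H} ) du dv = ( Γ(2H+1) / ( m m' (m + m') ) ) · ( m^{1−2H} + (m')^{1−2H} ), where Γ is the Gamma function. (Equivalently, for the stationary solutions Z^m, Z^{m'} of Ornstein–Uhlenbeck equations driven by the same fractional Brownian motion with Hurst parameter H, E[Z_0^m Z_0^{m'}] = (H Γ(2H)/(m+m'))(m^{1−2H} + (m')^{1−2H}).) -/
/-!
Split `|v - u| ^ p` into its restrictions to `u < v` and to `v < u`; swapping the variables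
exchanges the two pieces together with `m` and `m'`. On `u < v` the shift `v = u + t` factors
the integral as `∫ e^{-(m + m') u} du · ∫ t ^ p e^{-m' t} dt = Γ(p + 1) / (m' ^ (p + 1) (m + m'))`,
while the terms `u ^ p` and `v ^ p` factor directly. Each piece is integrable on the quadrant, so
the iterated integral is the integral over the product measure and may be split term by term.
-/

open MeasureTheory Real Set

local notation "μ₊" => Measure.restrict (volume : Measure ℝ) (Ioi (0 : ℝ))

lemma setIntegral_Ioi_zero_comp_add_right {E : Type*} [NormedAddCommGroup E] [NormedSpace ℝ E]
    (f : ℝ → E) (a : ℝ) :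
    ∫ x in Ioi 0, f (x + a) = ∫ x in Ioi a, f x := by
  simpa [preimage_add_const_Ioi] using
    (measurePreserving_add_right volume a).setIntegral_preimage_emb
      (measurableEmbedding_addRight a) f (Ioi a)

lemma integrableOn_Ioi_zero_comp_add_right_iff {E : Type*} [NormedAddCommGroup E] {f : ℝ → E}
    (a : ℝ) :
    IntegrableOn (fun x => f (x + a)) (Ioi 0) ↔ IntegrableOn f (Ioi a) := by
  simpa [preimage_add_const_Ioi, Function.comp_def] using
    (measurePreserving_add_right volume a).integrableOn_comp_preimage
    (measurableEmbedding_addRight a) (f := f) (s := Ioi a)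

variable {p c c' : ℝ}

lemma integrableOn_rpow_mul_exp_neg_mul (hp : -1 < p) (hc : 0 < c) :
    IntegrableOn (fun x : ℝ => x ^ p * exp (-c * x)) (Ioi 0) := by
  simpa using integrableOn_rpow_mul_exp_neg_mul_rpow hp one_pos hc

lemma integral_rpow_mul_exp_neg_mul (hp : -1 < p) (hc : 0 < c) :
    ∫ x in Ioi 0, x ^ p * exp (-c * x) = Gamma (p + 1) / c ^ (p + 1) := by
  have := integral_rpow_mul_exp_neg_mul_Ioi (a := p + 1) (by linarith) hc
  simp_rw [add_sub_cancel_right, ← neg_mul] at this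
  rw [this, div_rpow zero_le_one hc.le, one_rpow, one_div_mul_eq_div]

lemma integral_exp_neg_mul_Ioi_zero (hc : 0 < c) : ∫ x in Ioi 0, exp (-c * x) = 1 / c := by
  rw [integral_exp_mul_Ioi (neg_neg_iff_pos.2 hc)]
  simp [div_neg, neg_div]

lemma integral_Ioi_sub_rpow_mul_exp_neg_mul (hp : -1 < p) (hc : 0 < c) (a : ℝ) :
    ∫ x in Ioi a, (x - a) ^ p * exp (-c * x) = Gamma (p + 1) / c ^ (p + 1) * exp (-c * a) := by
  rw [← setIntegral_Ioi_zero_comp_add_right, ← integral_rpow_mul_exp_neg_mul hp hc,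
    ← integral_mul_const]
  congr 1 with x
  rw [add_sub_cancel_right, mul_add, exp_add]
  ring

lemma integrableOn_Ioi_sub_rpow_mul_exp_neg_mul (hp : -1 < p) (hc : 0 < c) (a : ℝ) :
    IntegrableOn (fun x => (x - a) ^ p * exp (-c * x)) (Ioi a) := by
  rw [← integrableOn_Ioi_zero_comp_add_right_iff]
  refine IntegrableOn.congr_fun ((integrableOn_rpow_mul_exp_neg_mul hp hc).mul_const
    (exp (-c * a))) (fun x _ => ?_) measurableSet_Ioi
  rw [add_sub_cancel_right, mul_add, exp_add]
  ring

lemma exp_mul_indicator_Ioi_eq (c c' u : ℝ) :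
    (fun v => exp (-c * u - c' * v) * (Ioi u).indicator (fun v => (v - u) ^ p) v) =
      (Ioi u).indicator (fun v => exp (-c * u) * ((v - u) ^ p * exp (-c' * v))) := by
  ext v
  simp only [indicator_apply, mem_Ioi]
  split_ifs
  · rw [sub_eq_add_neg, exp_add, ← neg_mul]
    ring
  · rw [mul_zero]

lemma integrableOn_exp_mul_indicator_Ioi (hp : -1 < p) (hc' : 0 < c') (c u : ℝ) :
    IntegrableOn (fun v => exp (-c * u - c' * v) * (Ioi u).indicator (fun v => (v - u) ^ p) v)
      (Ioi 0) := by
  rw [exp_mul_indicator_Ioi_eq]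
  have h := (integrableOn_Ioi_sub_rpow_mul_exp_neg_mul hp hc' u).const_mul (exp (-c * u))
  exact (IntegrableOn.integrable_indicator h measurableSet_Ioi).integrableOn

lemma integral_exp_mul_indicator_Ioi (hp : -1 < p) (hc' : 0 < c') (c : ℝ) {u : ℝ} (hu : 0 < u) :
    ∫ v in Ioi 0, exp (-c * u - c' * v) * (Ioi u).indicator (fun v => (v - u) ^ p) v =
      Gamma (p + 1) / c' ^ (p + 1) * exp (-(c + c') * u) := by
  rw [exp_mul_indicator_Ioi_eq, setIntegral_indicator measurableSet_Ioi,
    inter_eq_right.2 (Ioi_subset_Ioi hu.le), integral_const_mul,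
    integral_Ioi_sub_rpow_mul_exp_neg_mul hp hc', neg_add, add_mul, exp_add]
  ring

lemma integrable_exp_mul_indicator_Ioi (hp : -1 < p) (hc : 0 < c) (hc' : 0 < c') :
    Integrable (fun z : ℝ × ℝ => exp (-c * z.1 - c' * z.2) *
      (Ioi z.1).indicator (fun v => (v - z.1) ^ p) z.2) (μ₊.prod μ₊) := by
  have hmeas : Measurable (fun z : ℝ × ℝ => exp (-c * z.1 - c' * z.2) *
      (Ioi z.1).indicator (fun v => (v - z.1) ^ p) z.2) := by
    simp only [indicator, mem_Ioi]
    exact (by fun_prop : Measurable fun z : ℝ × ℝ => exp (-c * z.1 - c' * z.2)).mul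
      (Measurable.ite (measurableSet_lt measurable_fst measurable_snd) (by fun_prop)
        measurable_const)
  refine (integrable_prod_iff hmeas.aestronglyMeasurable).2
    ⟨Filter.Eventually.of_forall fun u => integrableOn_exp_mul_indicator_Ioi hp hc' c u, ?_⟩
  refine IntegrableOn.congr_fun ((exp_neg_integrableOn_Ioi 0 (add_pos hc hc')).const_mul
    (Gamma (p + 1) / c' ^ (p + 1))) (fun u hu => ?_) measurableSet_Ioi
  rw [← integral_exp_mul_indicator_Ioi hp hc' c hu]
  congr 1 with v
  refine (norm_of_nonneg (mul_nonneg (exp_pos _).le (indicator_nonneg (fun v hv => ?_) _))).symm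
  exact rpow_nonneg (sub_nonneg.2 hv.le) _

lemma integral_exp_mul_indicator_Ioi_prod (hp : -1 < p) (hc : 0 < c) (hc' : 0 < c') :
    ∫ z, exp (-c * z.1 - c' * z.2) * (Ioi z.1).indicator (fun v => (v - z.1) ^ p) z.2
      ∂(μ₊.prod μ₊) = Gamma (p + 1) / (c' ^ (p + 1) * (c + c')) := by
  rw [integral_prod _ (integrable_exp_mul_indicator_Ioi hp hc hc'),
    setIntegral_congr_fun measurableSet_Ioi
      (fun u hu => integral_exp_mul_indicator_Ioi hp hc' c hu),
    integral_const_mul, integral_exp_neg_mul_Ioi_zero (add_pos hc hc')]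
  field_simp

lemma exp_neg_mul_sub_neg_mul_comm (c c' x y : ℝ) :
    exp (-c' * y - c * x) = exp (-c * x - c' * y) := by
  ring_nf

lemma integral_exp_mul_swap (φ : ℝ → ℝ → ℝ) :
    ∫ z, exp (-c * z.1 - c' * z.2) * φ z.2 z.1 ∂(μ₊.prod μ₊) =
      ∫ z, exp (-c' * z.1 - c * z.2) * φ z.1 z.2 ∂(μ₊.prod μ₊) := by
  rw [← integral_prod_swap]
  simp only [Prod.fst_swap, Prod.snd_swap, exp_neg_mul_sub_neg_mul_comm]

lemma Integrable.exp_mul_swap {φ : ℝ → ℝ → ℝ}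
    (h : Integrable (fun z => exp (-c' * z.1 - c * z.2) * φ z.1 z.2) (μ₊.prod μ₊)) :
    Integrable (fun z => exp (-c * z.1 - c' * z.2) * φ z.2 z.1) (μ₊.prod μ₊) := by
  simpa only [Function.comp_def, Prod.fst_swap, Prod.snd_swap, exp_neg_mul_sub_neg_mul_comm]
    using h.swap

lemma exp_mul_rpow_fst_eq (c c' : ℝ) :
    (fun z : ℝ × ℝ => exp (-c * z.1 - c' * z.2) * z.1 ^ p) =
      fun z => z.1 ^ p * exp (-c * z.1) * exp (-c' * z.2) := by
  ext z
  rw [sub_eq_add_neg, exp_add, ← neg_mul]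
  ring

lemma integrable_exp_mul_rpow_fst (hp : -1 < p) (hc : 0 < c) (hc' : 0 < c') :
    Integrable (fun z : ℝ × ℝ => exp (-c * z.1 - c' * z.2) * z.1 ^ p) (μ₊.prod μ₊) := by
  rw [exp_mul_rpow_fst_eq]
  exact (integrableOn_rpow_mul_exp_neg_mul hp hc).mul_prod (exp_neg_integrableOn_Ioi 0 hc')

lemma integral_exp_mul_rpow_fst (hp : -1 < p) (hc : 0 < c) (hc' : 0 < c') :
    ∫ z, exp (-c * z.1 - c' * z.2) * z.1 ^ p ∂(μ₊.prod μ₊) =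
      Gamma (p + 1) / (c ^ (p + 1) * c') := by
  rw [exp_mul_rpow_fst_eq,
    integral_prod_mul (fun x => x ^ p * exp (-c * x)) (fun y => exp (-c' * y)),
    integral_rpow_mul_exp_neg_mul hp hc, integral_exp_neg_mul_Ioi_zero hc']
  field_simp

-- On the diagonal both sides are `0 ^ p`, which is `0` only because `p ≠ 0`.
lemma abs_sub_rpow_eq_indicator_add_indicator (hp0 : p ≠ 0) (u v : ℝ) :
    |v - u| ^ p = (Ioi u).indicator (fun v => (v - u) ^ p) v +
      (Ioi v).indicator (fun u => (u - v) ^ p) u := by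
  rcases lt_trichotomy u v with h | rfl | h
  · simp [h, h.not_gt, abs_of_pos (sub_pos.2 h)]
  · simp [zero_rpow hp0]
  · simp [h, h.not_gt, abs_of_neg (sub_neg.2 h)]

lemma integrable_exp_mul_abs_sub_rpow (hp : -1 < p) (hp0 : p ≠ 0) (hc : 0 < c)
    (hc' : 0 < c') :
    Integrable (fun z : ℝ × ℝ => exp (-c * z.1 - c' * z.2) * |z.2 - z.1| ^ p) (μ₊.prod μ₊) := by
  simp_rw [abs_sub_rpow_eq_indicator_add_indicator hp0, mul_add]
  exact (integrable_exp_mul_indicator_Ioi hp hc hc').add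
    (Integrable.exp_mul_swap (φ := fun a b => (Ioi a).indicator (fun v => (v - a) ^ p) b)
      (integrable_exp_mul_indicator_Ioi hp hc' hc))

lemma integral_exp_mul_abs_sub_rpow (hp : -1 < p) (hp0 : p ≠ 0) (hc : 0 < c) (hc' : 0 < c') :
    ∫ z, exp (-c * z.1 - c' * z.2) * |z.2 - z.1| ^ p ∂(μ₊.prod μ₊) =
      Gamma (p + 1) / (c + c') * (1 / c ^ (p + 1) + 1 / c' ^ (p + 1)) := by
  simp_rw [abs_sub_rpow_eq_indicator_add_indicator hp0, mul_add]
  rw [integral_add (integrable_exp_mul_indicator_Ioi hp hc hc')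
      (Integrable.exp_mul_swap (φ := fun a b => (Ioi a).indicator (fun v => (v - a) ^ p) b)
        (integrable_exp_mul_indicator_Ioi hp hc' hc)),
    integral_exp_mul_swap (fun a b => (Ioi a).indicator (fun v => (v - a) ^ p) b),
    integral_exp_mul_indicator_Ioi_prod hp hc hc', integral_exp_mul_indicator_Ioi_prod hp hc' hc]
  field_simp
  ring

theorem statement_18_general (H m m' : ℝ) (hH0 : 0 < H) (hm : 0 < m) (hm' : 0 < m') :
    (∫ u in Set.Ioi (0 : ℝ), ∫ v in Set.Ioi (0 : ℝ),
        Real.exp (-m * u - m' * v) * (u ^ (2 * H) + v ^ (2 * H) - |v - u| ^ (2 * H))) =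
      Real.Gamma (2 * H + 1) / (m * m' * (m + m')) *
        (m ^ (1 - 2 * H) + m' ^ (1 - 2 * H)) := by
  have hp : -1 < 2 * H := by linarith
  have hp0 : 2 * H ≠ 0 := by positivity
  have h₁ := integrable_exp_mul_rpow_fst hp hm hm'
  have h₂ := Integrable.exp_mul_swap (φ := fun a _ => a ^ (2 * H))
    (integrable_exp_mul_rpow_fst hp hm' hm)
  have h₃ := integrable_exp_mul_abs_sub_rpow hp hp0 hm hm'
  have h₁₂ := h₁.fun_add h₂
  have hF : Integrable (fun z : ℝ × ℝ => exp (-m * z.1 - m' * z.2) *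
      (z.1 ^ (2 * H) + z.2 ^ (2 * H) - |z.2 - z.1| ^ (2 * H))) (μ₊.prod μ₊) := by
    simp_rw [mul_sub, mul_add]
    exact h₁₂.sub h₃
  rw [← integral_prod _ hF]
  simp_rw [mul_sub, mul_add]
  rw [integral_sub h₁₂ h₃, integral_add h₁ h₂,
    integral_exp_mul_swap (fun a _ => a ^ (2 * H)), integral_exp_mul_rpow_fst hp hm hm',
    integral_exp_mul_rpow_fst hp hm' hm, integral_exp_mul_abs_sub_rpow hp hp0 hm hm',
    rpow_add_one hm.ne', rpow_add_one hm'.ne', rpow_sub hm, rpow_sub hm', rpow_one, rpow_one]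
  field_simp
  ring

/-- explicit value of the double Laplace-type integral giving the
stationary covariance of two fractional Ornstein–Uhlenbeck processes. -/
theorem statement_18 (H m m' : ℝ) (hH0 : 0 < H) (hH1 : H < 1) (hH : H ≠ 1 / 2)
    (hm : 0 < m) (hm' : 0 < m') :
    (∫ u in Set.Ioi (0 : ℝ), ∫ v in Set.Ioi (0 : ℝ),
        Real.exp (-m * u - m' * v) * (u ^ (2 * H) + v ^ (2 * H) - |v - u| ^ (2 * H))) =
      Real.Gamma (2 * H + 1) / (m * m' * (m + m')) *
        (m ^ (1 - 2 * H) + m' ^ (1 - 2 * H)) :=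
  statement_18_general H m m' hH0 hm hm'
end
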